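/- arXiv:1005.0077 — 2 statements merged into one kernel-verified Lean document; each statement's English description precedes it below -/
import Mathlib

section
/- Let G be a topological group, μ a regular Borel probability measure on G, and φ a Borel measurable quasimorphism on G that is integrable with respect to μ. Then φ is integrable with respect to the n-fold convolution power μ^{*n} for every n ≥ 1, and the limit ℓ_μ(φ) := lim_{n→∞} (1/n) ∫_G φ dμ^{*n} exists in ℝ. -/
/-!
The convolution power `μ^{*n}` is the law of the ordered product `g₁ ⋯ gₙ` of `n` independent
`μ`-distributed elements, i.e. the pushforward of `μ^{⊗n}` under `(gᵢ) ↦ g₁ ⋯ gₙ`. Splitting an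
`(m + n)`-tuple into an `m`-tuple and an `n`-tuple, the bound `|φ (g h) - φ g - φ h| ≤ D` gives
integrability by induction and shows that `aₙ = ∫ φ dμ^{*n}` is additive up to `D`; Fekete's lemma
for the subadditive sequence `aₙ + D` then yields the limit of `aₙ / n`. If multiplication fails to
be a.e.-measurable at some stage, all later convolution powers are `0` and the limit is `0`.
-/

open MeasureTheory Filter Topology

/-- The `n`-fold convolution power `μ^{*n}` of a measure on a monoid,
with `μ^{*0} = δ_e`. -/
noncomputable def convPow {G : Type*} [Monoid G] [MeasurableSpace G]
    (μ : Measure G) : ℕ → Measure G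
  | 0 => Measure.dirac 1
  | n + 1 => Measure.map (fun p : G × G => p.1 * p.2) ((convPow μ n).prod μ)

namespace MeasurableEquiv

def finAppend (α : Type*) [MeasurableSpace α] (m n : ℕ) :
    (Fin m → α) × (Fin n → α) ≃ᵐ (Fin (m + n) → α) :=
  (sumPiEquivProdPi fun _ => α).symm.trans (piCongrLeft (fun _ => α) finSumFinEquiv)

@[simp]
theorem finAppend_apply {α : Type*} [MeasurableSpace α] {m n : ℕ}
    (p : (Fin m → α) × (Fin n → α)) :
    finAppend α m n p = Fin.append p.1 p.2 := by
  ext i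
  refine Fin.addCases (fun i => ?_) (fun i => ?_) i
  · rw [Fin.append_left, ← finSumFinEquiv_apply_left]
    exact Equiv.piCongrLeft_sumInl (fun _ => α) finSumFinEquiv p.1 p.2 i
  · rw [Fin.append_right, ← finSumFinEquiv_apply_right]
    exact Equiv.piCongrLeft_sumInr (fun _ => α) finSumFinEquiv p.1 p.2 i

end MeasurableEquiv

theorem MeasureTheory.measurePreserving_finAppend {α : Type*} [MeasurableSpace α] (μ : Measure α)
    [SigmaFinite μ] (m n : ℕ) :
    MeasurePreserving (MeasurableEquiv.finAppend α m n)
      ((Measure.pi fun _ : Fin m => μ).prod (Measure.pi fun _ : Fin n => μ))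
      (Measure.pi fun _ : Fin (m + n) => μ) :=
  (measurePreserving_piCongrLeft (fun _ => μ) finSumFinEquiv).comp
    (measurePreserving_sumPiEquivProdPi_symm fun _ => μ)

theorem MeasureTheory.Measure.map_prod_map_of_aemeasurable {α β γ δ : Type*} [MeasurableSpace α]
    [MeasurableSpace β] [MeasurableSpace γ] [MeasurableSpace δ] {μ : Measure α} {ν : Measure γ}
    [SFinite μ] [SFinite ν] {f : α → β} {g : γ → δ}
    (hf : AEMeasurable f μ) (hg : AEMeasurable g ν) :
    (μ.map f).prod (ν.map g) = (μ.prod ν).map (Prod.map f g) := by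
  rw [Measure.map_congr hf.ae_eq_mk, Measure.map_congr hg.ae_eq_mk,
    Measure.map_prod_map _ _ hf.measurable_mk hg.measurable_mk]
  refine Measure.map_congr ?_
  filter_upwards [Measure.quasiMeasurePreserving_fst.ae_eq_comp hf.ae_eq_mk,
    Measure.quasiMeasurePreserving_snd.ae_eq_comp hg.ae_eq_mk] with z h1 h2
  simp_all [Prod.map]

section Monoid

variable {G : Type*} [Monoid G]

def orderedProd {n : ℕ} (x : Fin n → G) : G := (List.ofFn x).prod

@[simp]
theorem orderedProd_append {m n : ℕ} (x : Fin m → G) (y : Fin n → G) :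
    orderedProd (Fin.append x y) = orderedProd x * orderedProd y := by
  simp [orderedProd]

@[simp]
theorem orderedProd_zero (x : Fin 0 → G) : orderedProd x = 1 := by
  simp [orderedProd]

variable [MeasurableSpace G]

theorem orderedProd_eq_funUnique :
    (orderedProd : (Fin 1 → G) → G) = MeasurableEquiv.funUnique (Fin 1) G := by
  funext x; simp [orderedProd]

/-- Multiplication need not be measurable for the Borel σ-algebra of a non-second-countable
group, and `Measure.map` returns `0` along maps that are not a.e.-measurable. -/
def MulAEMeasurableConvPow (μ : Measure G) (k : ℕ) : Prop :=
  AEMeasurable (fun p : G × G => p.1 * p.2) ((convPow μ k).prod μ)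

theorem convPow_eq_zero_of_not_mulAEMeasurable {μ : Measure G} {n : ℕ}
    (h : ¬ ∀ k < n, MulAEMeasurableConvPow μ k) : convPow μ n = 0 := by
  induction n with
  | zero => simp at h
  | succ n ih =>
    by_cases hn : ∀ k < n, MulAEMeasurableConvPow μ k
    · have hbad : ¬ MulAEMeasurableConvPow μ n := fun hn' =>
        h fun k hk => (Nat.lt_succ_iff_lt_or_eq.mp hk).elim (hn k) (· ▸ hn')
      exact Measure.map_of_not_aemeasurable hbad
    · simp [convPow, ih hn]

theorem aemeasurable_orderedProd_and_map_pi_eq_convPow (μ : Measure G) [SigmaFinite μ] {n : ℕ}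
    (h : ∀ k < n, MulAEMeasurableConvPow μ k) :
    AEMeasurable orderedProd (Measure.pi fun _ : Fin n => μ) ∧
      (Measure.pi fun _ : Fin n => μ).map orderedProd = convPow μ n := by
  induction n with
  | zero =>
    have : (orderedProd : (Fin 0 → G) → G) = fun _ => 1 := funext orderedProd_zero
    simp [this, convPow]
  | succ n ih =>
    obtain ⟨hae, hmap⟩ := ih fun k hk => h k (hk.trans n.lt_succ_self)
    set ρ := (Measure.pi fun _ : Fin n => μ).prod (Measure.pi fun _ : Fin 1 => μ)
    set A := MeasurableEquiv.finAppend G n 1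
    have hA : MeasurePreserving A ρ _ := measurePreserving_finAppend μ n 1
    have hsplit : (orderedProd ∘ A) =
        (fun p : G × G => p.1 * p.2) ∘ Prod.map orderedProd orderedProd := by
      funext p; simp [A]
    have hae₁ : AEMeasurable orderedProd (Measure.pi fun _ : Fin 1 => μ) := by
      rw [orderedProd_eq_funUnique]; exact (MeasurableEquiv.funUnique _ _).measurable.aemeasurable
    have hmap₁ : (Measure.pi fun _ : Fin 1 => μ).map orderedProd = μ := by
      rw [orderedProd_eq_funUnique]; exact (measurePreserving_funUnique μ (Fin 1)).map_eq
    have hpair : AEMeasurable (Prod.map orderedProd orderedProd) ρ :=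
      (hae.comp_quasiMeasurePreserving Measure.quasiMeasurePreserving_fst).prodMk
        (hae₁.comp_quasiMeasurePreserving Measure.quasiMeasurePreserving_snd)
    have hprod : ρ.map (Prod.map orderedProd orderedProd) = (convPow μ n).prod μ := by
      rw [← Measure.map_prod_map_of_aemeasurable hae hae₁, hmap, hmap₁]
    have hmul : AEMeasurable (fun p : G × G => p.1 * p.2)
        (ρ.map (Prod.map orderedProd orderedProd)) := by
      rw [hprod]; exact h n n.lt_succ_self
    have hae' : AEMeasurable orderedProd (ρ.map A) := by
      rw [aemeasurable_map_equiv_iff, hsplit]; exact hmul.comp_aemeasurable hpair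
    rw [← hA.map_eq, AEMeasurable.map_map_of_aemeasurable hae' A.measurable.aemeasurable, hsplit,
      ← AEMeasurable.map_map_of_aemeasurable hmul hpair, hprod]
    exact ⟨hae', rfl⟩

end Monoid

section Quasimorphism

variable {G X Y : Type*} [Mul G] [MeasurableSpace X] [MeasurableSpace Y]
  {α : Measure X} {β : Measure Y} {φ : G → ℝ} {D : ℝ} {f : X → G} {g : Y → G}

theorem integrable_comp_mul_prod_of_quasimorphism [IsFiniteMeasure α] [IsFiniteMeasure β]
    (hD : ∀ a b : G, |φ (a * b) - φ a - φ b| ≤ D)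
    (hf : Integrable (fun x => φ (f x)) α) (hg : Integrable (fun y => φ (g y)) β)
    (hfg : AEStronglyMeasurable (fun z : X × Y => φ (f z.1 * g z.2)) (α.prod β)) :
    Integrable (fun z : X × Y => φ (f z.1 * g z.2)) (α.prod β) := by
  refine Integrable.mono' (((hf.comp_fst β).abs.add (hg.comp_snd α).abs).add
    (integrable_const D)) hfg (ae_of_all _ fun z => ?_)
  calc ‖φ (f z.1 * g z.2)‖
      = |(φ (f z.1 * g z.2) - φ (f z.1) - φ (g z.2)) + φ (f z.1) + φ (g z.2)| := by
        rw [Real.norm_eq_abs]; congr 1; ring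
    _ ≤ |φ (f z.1 * g z.2) - φ (f z.1) - φ (g z.2)| + |φ (f z.1)| + |φ (g z.2)| :=
        abs_add_three _ _ _
    _ ≤ |φ (f z.1)| + |φ (g z.2)| + D := by linarith [hD (f z.1) (g z.2)]

theorem abs_integral_comp_mul_prod_sub_le [IsProbabilityMeasure α] [IsProbabilityMeasure β]
    (hD : ∀ a b : G, |φ (a * b) - φ a - φ b| ≤ D)
    (hf : Integrable (fun x => φ (f x)) α) (hg : Integrable (fun y => φ (g y)) β)
    (hfg : AEStronglyMeasurable (fun z : X × Y => φ (f z.1 * g z.2)) (α.prod β)) :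
    |∫ z, φ (f z.1 * g z.2) ∂(α.prod β) - ∫ x, φ (f x) ∂α - ∫ y, φ (g y) ∂β| ≤ D := by
  have hfg' := integrable_comp_mul_prod_of_quasimorphism hD hf hg hfg
  have hsplit : ∫ z, φ (f z.1 * g z.2) ∂(α.prod β) - ∫ x, φ (f x) ∂α - ∫ y, φ (g y) ∂β =
      ∫ z, (φ (f z.1 * g z.2) - φ (f z.1) - φ (g z.2)) ∂(α.prod β) := by
    rw [integral_sub (f := fun z => φ (f z.1 * g z.2) - φ (f z.1)) (hfg'.sub (hf.comp_fst β))
        (hg.comp_snd α),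
      integral_sub hfg' (hf.comp_fst β), integral_fun_fst (fun x => φ (f x)),
      integral_fun_snd (fun y => φ (g y))]
    simp
  rw [hsplit, ← Real.norm_eq_abs]
  simpa using norm_integral_le_of_norm_le_const (μ := α.prod β)
    (ae_of_all _ fun z => (Real.norm_eq_abs _).trans_le (hD _ _))

end Quasimorphism

theorem exists_tendsto_div_of_abs_add_sub_le {a : ℕ → ℝ} {D : ℝ}
    (h : ∀ m n, |a (m + n) - a m - a n| ≤ D) :
    ∃ L, Tendsto (fun n : ℕ => a n / n) atTop (𝓝 L) := by
  have hsub : Subadditive fun n => a n + D := fun m n => by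
    linarith [(abs_le.mp (h m n)).2]
  have hsuper : ∀ n : ℕ, n * (a 1 - D) ≤ a n + D := by
    intro n
    induction n with
    | zero =>
      have h0 := h 0 0
      simp only [add_zero, sub_self, zero_sub, abs_neg] at h0
      simpa [neg_le_iff_add_nonneg] using neg_le_of_abs_le h0
    | succ n ih => push_cast; linarith [(abs_le.mp (h n 1)).1]
  have hbdd : BddBelow (Set.range fun n : ℕ => (a n + D) / n) := by
    refine ⟨min (a 1 - D) 0, ?_⟩
    rintro _ ⟨n, rfl⟩
    rcases n.eq_zero_or_pos with rfl | hn
    · simp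
    · refine (min_le_left _ _).trans ?_
      rw [le_div_iff₀ (by exact_mod_cast hn)]
      linarith [hsuper n]
  refine ⟨hsub.lim, ?_⟩
  simpa [add_div] using (hsub.tendsto_lim hbdd).sub (tendsto_const_div_atTop_nhds_zero_nat D)

section ConvPow

variable {G : Type*} [Monoid G] [MeasurableSpace G] {μ : Measure G} [IsProbabilityMeasure μ]
  {φ : G → ℝ} {D : ℝ}

theorem aestronglyMeasurable_comp_orderedProd_mul (hφ : Measurable φ) {m n : ℕ}
    (h : ∀ k < m + n, MulAEMeasurableConvPow μ k) :
    AEStronglyMeasurable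
      (fun z : (Fin m → G) × (Fin n → G) => φ (orderedProd z.1 * orderedProd z.2))
      ((Measure.pi fun _ : Fin m => μ).prod (Measure.pi fun _ : Fin n => μ)) := by
  have hP := (aemeasurable_orderedProd_and_map_pi_eq_convPow μ h).1
  have := (hφ.comp_aemeasurable hP).aestronglyMeasurable.comp_measurePreserving
    (measurePreserving_finAppend μ m n)
  simpa [Function.comp_def] using this

theorem integrable_comp_orderedProd (hφ : Measurable φ) (hint : Integrable φ μ)
    (hD : ∀ a b : G, |φ (a * b) - φ a - φ b| ≤ D) {n : ℕ}
    (h : ∀ k < n, MulAEMeasurableConvPow μ k) :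
    Integrable (fun x => φ (orderedProd x)) (Measure.pi fun _ : Fin n => μ) := by
  induction n with
  | zero => simp
  | succ n ih =>
    have hint₁ : Integrable (fun x => φ (orderedProd x)) (Measure.pi fun _ : Fin 1 => μ) := by
      rw [orderedProd_eq_funUnique]
      exact ((measurePreserving_funUnique μ (Fin 1)).integrable_comp
        hint.aestronglyMeasurable).mpr hint
    have hA := measurePreserving_finAppend μ n 1
    rw [← hA.integrable_comp_emb (MeasurableEquiv.finAppend G n 1).measurableEmbedding]
    simpa [Function.comp_def] using integrable_comp_mul_prod_of_quasimorphism hD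
      (ih fun k hk => h k (hk.trans n.lt_succ_self)) hint₁
      (aestronglyMeasurable_comp_orderedProd_mul hφ h)

theorem integral_convPow_eq_integral_pi (hφ : Measurable φ) {n : ℕ}
    (h : ∀ k < n, MulAEMeasurableConvPow μ k) :
    ∫ g, φ g ∂(convPow μ n) = ∫ x, φ (orderedProd x) ∂(Measure.pi fun _ : Fin n => μ) := by
  obtain ⟨hP, hmap⟩ := aemeasurable_orderedProd_and_map_pi_eq_convPow μ h
  rw [← hmap, integral_map hP hφ.aestronglyMeasurable]

theorem integrable_convPow (hφ : Measurable φ) (hint : Integrable φ μ)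
    (hD : ∀ a b : G, |φ (a * b) - φ a - φ b| ≤ D) (n : ℕ) :
    Integrable φ (convPow μ n) := by
  by_cases h : ∀ k < n, MulAEMeasurableConvPow μ k
  · obtain ⟨hP, hmap⟩ := aemeasurable_orderedProd_and_map_pi_eq_convPow μ h
    rw [← hmap, integrable_map_measure hφ.aestronglyMeasurable hP]
    exact integrable_comp_orderedProd hφ hint hD h
  · rw [convPow_eq_zero_of_not_mulAEMeasurable h]
    exact integrable_zero_measure

theorem abs_integral_convPow_add_sub_le (hφ : Measurable φ) (hint : Integrable φ μ)
    (hD : ∀ a b : G, |φ (a * b) - φ a - φ b| ≤ D) (h : ∀ k, MulAEMeasurableConvPow μ k)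
    (m n : ℕ) :
    |∫ g, φ g ∂(convPow μ (m + n)) - ∫ g, φ g ∂(convPow μ m) - ∫ g, φ g ∂(convPow μ n)| ≤ D := by
  simp only [integral_convPow_eq_integral_pi hφ fun k _ => h k,
    ← (measurePreserving_finAppend μ m n).integral_comp', MeasurableEquiv.finAppend_apply,
    orderedProd_append]
  exact abs_integral_comp_mul_prod_sub_le hD
    (integrable_comp_orderedProd hφ hint hD fun k _ => h k)
    (integrable_comp_orderedProd hφ hint hD fun k _ => h k)
    (aestronglyMeasurable_comp_orderedProd_mul hφ fun k _ => h k)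

end ConvPow

theorem quasimorphism_distortion_exists_general
    {G : Type*} [Group G] [MeasurableSpace G]
    (μ : Measure G) [IsProbabilityMeasure μ]
    (φ : G → ℝ) (hmeas : Measurable φ)
    (hqm : ∃ D : ℝ, ∀ g h : G, |φ (g * h) - φ g - φ h| ≤ D)
    (hint : Integrable φ μ) :
    (∀ n : ℕ, 1 ≤ n → Integrable φ (convPow μ n)) ∧
      ∃ L : ℝ, Tendsto (fun n : ℕ => (∫ g, φ g ∂(convPow μ n)) / n) atTop (𝓝 L) := by
  obtain ⟨D, hD⟩ := hqm
  refine ⟨fun n _ => integrable_convPow hmeas hint hD n, ?_⟩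
  by_cases h : ∀ k, MulAEMeasurableConvPow μ k
  · exact exists_tendsto_div_of_abs_add_sub_le (abs_integral_convPow_add_sub_le hmeas hint hD h)
  · obtain ⟨k, hk⟩ := not_forall.mp h
    have hzero : ∀ n > k, convPow μ n = 0 := fun n hn =>
      convPow_eq_zero_of_not_mulAEMeasurable fun hall => hk (hall k hn)
    refine ⟨0, tendsto_const_nhds.congr' ?_⟩
    filter_upwards [eventually_gt_atTop k] with n hn
    simp [hzero n hn]

/-- for a Borel measurable, `μ`-integrable quasimorphism `φ` on a topological
group `G` equipped with a regular Borel probability measure `μ`, the function `φ` is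
`μ^{*n}`-integrable for all `n ≥ 1` and the μ-distortion
`ℓ_μ(φ) = lim_n (1/n) ∫ φ dμ^{*n}` exists. -/
theorem quasimorphism_distortion_exists
    {G : Type*} [Group G] [TopologicalSpace G] [IsTopologicalGroup G]
    [MeasurableSpace G] [BorelSpace G]
    (μ : Measure G) [IsProbabilityMeasure μ] (hreg : μ.Regular)
    (φ : G → ℝ) (hmeas : Measurable φ)
    (hqm : ∃ D : ℝ, ∀ g h : G, |φ (g * h) - φ g - φ h| ≤ D)
    (hint : Integrable φ μ) :
    (∀ n : ℕ, 1 ≤ n → Integrable φ (convPow μ n)) ∧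
      ∃ L : ℝ, Tendsto (fun n : ℕ => (∫ g, φ g ∂(convPow μ n)) / n) atTop (𝓝 L) :=
  quasimorphism_distortion_exists_general μ φ hmeas hqm hint
end

section
/- Let G be a topological group, μ a regular Borel probability measure on G that is symmetric, i.e. ι_*μ = μ where ι(g) = g^{−1}, and φ a Borel measurable, μ-integrable quasimorphism on G. Then the μ-distortion of φ vanishes: ℓ_μ(φ) = 0. -/
open MeasureTheory Filter Topology

/-!
Inversion turns `ρ ∗ σ` into `σ.inv ∗ ρ.inv`, so the convolution powers of a symmetric `μ` are
symmetric; the induction carries along `μ ∗ μ^{*n} = μ^{*n} ∗ μ`, which is where associativity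
enters. For a symmetric measure `ν`, `2 ∫ φ dν = ∫ (φ g + φ g⁻¹) dν`, and
`φ g + φ g⁻¹ = φ 1 - ∂φ(g, g⁻¹)` is bounded by `2 D(φ)`. So `∫ φ dμ^{*n}` is bounded in `n`.

Multiplication `G × G → G` need not be measurable for the product σ-algebra, so a convolution
can be the junk value `0` and associativity only holds where neither side is `0`. In the
identities needed here the two sides are exchanged by inversion, hence vanish together.
-/

namespace MeasureTheory.Measure

section General

variable {α β γ : Type*} [MeasurableSpace α] [MeasurableSpace β] [MeasurableSpace γ]

lemma map_measurableEquiv_map (e : β ≃ᵐ γ) (f : α → β) (μ : Measure α) :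
    (μ.map f).map e = μ.map (e ∘ f) := by
  by_cases hf : AEMeasurable f μ
  · exact e.measurable.aemeasurable.map_map_of_aemeasurable hf
  · have hef : ¬ AEMeasurable (e ∘ f) μ := fun h ↦ hf <| by
      simpa [Function.comp_def] using e.symm.measurable.comp_aemeasurable h
    rw [map_of_not_aemeasurable hf, map_of_not_aemeasurable hef, Measure.map_zero]

lemma map_map_measurableEquiv (e : α ≃ᵐ β) (f : β → γ) (μ : Measure α) :
    (μ.map e).map f = μ.map (f ∘ e) := by
  by_cases hf : AEMeasurable f (μ.map e)
  · exact hf.map_map_of_aemeasurable e.measurable.aemeasurable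
  · rw [map_of_not_aemeasurable hf,
      map_of_not_aemeasurable fun h ↦ hf ((aemeasurable_map_equiv_iff e).2 h)]

instance (ρ : Measure α) (σ : Measure β) [IsZeroOrProbabilityMeasure ρ]
    [IsZeroOrProbabilityMeasure σ] : IsZeroOrProbabilityMeasure (ρ.prod σ) := by
  rcases eq_zero_or_isProbabilityMeasure ρ with rfl | _
  · rw [zero_prod]; infer_instance
  rcases eq_zero_or_isProbabilityMeasure σ with rfl | _
  · rw [prod_zero]; infer_instance
  infer_instance

end General

section Monoid

variable {M : Type*} [Monoid M] [MeasurableSpace M] {ρ σ τ : Measure M}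

lemma aemeasurable_mul_of_mconv_ne_zero (h : ρ ∗ₘ σ ≠ 0) :
    AEMeasurable (fun p : M × M ↦ p.1 * p.2) (ρ.prod σ) := by
  contrapose! h
  exact map_of_not_aemeasurable h

lemma dirac_one_mconv_of_ne_zero [SFinite ρ] (h : dirac 1 ∗ₘ ρ ≠ 0) : dirac 1 ∗ₘ ρ = ρ := by
  have hmul := aemeasurable_mul_of_mconv_ne_zero h
  rw [dirac_prod] at hmul
  rw [mconv, dirac_prod, hmul.map_map_of_aemeasurable measurable_prodMk_left.aemeasurable]
  simp [Function.comp_def]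

lemma mconv_dirac_one_of_ne_zero [SFinite ρ] (h : ρ ∗ₘ dirac 1 ≠ 0) : ρ ∗ₘ dirac 1 = ρ := by
  have hmul := aemeasurable_mul_of_mconv_ne_zero h
  rw [prod_dirac] at hmul
  rw [mconv, prod_dirac, hmul.map_map_of_aemeasurable measurable_prodMk_right.aemeasurable]
  simp [Function.comp_def]

variable [SFinite ρ] [SFinite σ] [SFinite τ]

lemma mconv_mconv_eq_map_prod_prod (h₁ : AEMeasurable (fun p : M × M ↦ p.1 * p.2) (ρ.prod σ))
    (h₂ : AEMeasurable (fun p : M × M ↦ p.1 * p.2) ((ρ ∗ₘ σ).prod τ)) :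
    (ρ ∗ₘ σ) ∗ₘ τ = ((ρ.prod σ).prod τ).map (fun q ↦ q.1.1 * q.1.2 * q.2) := by
  have hprod : (ρ ∗ₘ σ).prod τ = ((ρ.prod σ).prod τ).map (Prod.map h₁.mk id) := by
    rw [mconv, map_congr h₁.ae_eq_mk, ← map_prod_map _ _ h₁.measurable_mk measurable_id, map_id]
  rw [hprod] at h₂
  rw [mconv, hprod,
    h₂.map_map_of_aemeasurable (h₁.measurable_mk.prodMap measurable_id).aemeasurable]
  refine map_congr ?_
  filter_upwards [quasiMeasurePreserving_fst.ae_eq_comp h₁.ae_eq_mk] with q hq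
  exact congrArg (· * q.2) hq.symm

lemma mconv_mconv_eq_map_prod_prod' (h₁ : AEMeasurable (fun p : M × M ↦ p.1 * p.2) (σ.prod τ))
    (h₂ : AEMeasurable (fun p : M × M ↦ p.1 * p.2) (ρ.prod (σ ∗ₘ τ))) :
    ρ ∗ₘ (σ ∗ₘ τ) = (ρ.prod (σ.prod τ)).map (fun q ↦ q.1 * (q.2.1 * q.2.2)) := by
  have hprod : ρ.prod (σ ∗ₘ τ) = (ρ.prod (σ.prod τ)).map (Prod.map id h₁.mk) := by
    rw [mconv, map_congr h₁.ae_eq_mk, ← map_prod_map _ _ measurable_id h₁.measurable_mk, map_id]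
  rw [hprod] at h₂
  rw [mconv, hprod,
    h₂.map_map_of_aemeasurable (measurable_id.prodMap h₁.measurable_mk).aemeasurable]
  refine map_congr ?_
  filter_upwards [quasiMeasurePreserving_snd.ae_eq_comp h₁.ae_eq_mk] with q hq
  exact congrArg (q.1 * ·) hq.symm

lemma mconv_assoc_of_ne_zero (hl : (ρ ∗ₘ σ) ∗ₘ τ ≠ 0) (hr : ρ ∗ₘ (σ ∗ₘ τ) ≠ 0) :
    (ρ ∗ₘ σ) ∗ₘ τ = ρ ∗ₘ (σ ∗ₘ τ) := by
  have hρσ : ρ ∗ₘ σ ≠ 0 := fun h ↦ hl (by rw [h, zero_mconv])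
  have hστ : σ ∗ₘ τ ≠ 0 := fun h ↦ hr (by rw [h, mconv_zero])
  rw [mconv_mconv_eq_map_prod_prod (aemeasurable_mul_of_mconv_ne_zero hρσ)
      (aemeasurable_mul_of_mconv_ne_zero hl),
    mconv_mconv_eq_map_prod_prod' (aemeasurable_mul_of_mconv_ne_zero hστ)
      (aemeasurable_mul_of_mconv_ne_zero hr),
    ← prodAssoc_prod, map_map_measurableEquiv]
  congr 1
  funext q
  exact mul_assoc _ _ _

end Monoid

section Group

variable {G : Type*} [Group G] [MeasurableSpace G] [MeasurableInv G] {ρ σ : Measure G}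

lemma inv_eq_zero_iff : ρ.inv = 0 ↔ ρ = 0 := by
  constructor
  · intro h
    rw [← ρ.inv_inv, h, Measure.inv, Measure.map_zero]
  · rintro rfl
    exact Measure.map_zero _

lemma inv_mconv [SFinite ρ] [SFinite σ] : (ρ ∗ₘ σ).inv = σ.inv ∗ₘ ρ.inv := by
  let e : G × G ≃ᵐ G × G :=
    MeasurableEquiv.prodComm.trans ((MeasurableEquiv.inv G).prodCongr (MeasurableEquiv.inv G))
  have he : (ρ.prod σ).map e = σ.inv.prod ρ.inv := by
    have : ⇑e = Prod.map Inv.inv Inv.inv ∘ Prod.swap := rfl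
    rw [this, ← map_map (measurable_inv.prodMap measurable_inv) measurable_swap, prod_swap,
      ← map_prod_map _ _ measurable_inv measurable_inv]
    rfl
  rw [mconv, mconv, ← he, map_map_measurableEquiv]
  refine (map_measurableEquiv_map (MeasurableEquiv.inv G) _ _).trans ?_
  congr 1
  funext p
  exact mul_inv_rev p.1 p.2

instance : (dirac (1 : G)).IsInvInvariant :=
  ⟨by rw [Measure.inv, map_dirac' measurable_inv, inv_one]⟩

lemma IsInvInvariant.mconv [SFinite ρ] [SFinite σ] [ρ.IsInvInvariant] [σ.IsInvInvariant]
    (h : σ ∗ₘ ρ = ρ ∗ₘ σ) : (ρ ∗ₘ σ).IsInvInvariant :=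
  ⟨by rw [inv_mconv, inv_eq_self, inv_eq_self, h]⟩

lemma mconv_dirac_one_comm [SFinite ρ] [ρ.IsInvInvariant] : ρ ∗ₘ dirac 1 = dirac 1 ∗ₘ ρ := by
  have hinv : (ρ ∗ₘ dirac 1).inv = dirac 1 ∗ₘ ρ := by rw [inv_mconv, inv_eq_self, inv_eq_self]
  by_cases h : dirac 1 ∗ₘ ρ = 0
  · rw [h, ← inv_eq_zero_iff, hinv, h]
  · have h' : ρ ∗ₘ dirac 1 ≠ 0 := fun h' ↦ h (by rw [← hinv, h', inv_eq_zero_iff])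
    rw [mconv_dirac_one_of_ne_zero h', dirac_one_mconv_of_ne_zero h]

lemma mconv_mconv_comm_of_isInvInvariant [SFinite ρ] [SFinite σ] [ρ.IsInvInvariant]
    [σ.IsInvInvariant] (h : ρ ∗ₘ σ = σ ∗ₘ ρ) : ρ ∗ₘ (σ ∗ₘ ρ) = (σ ∗ₘ ρ) ∗ₘ ρ := by
  have := IsInvInvariant.mconv (ρ := σ) (σ := ρ) h
  have hinv : (ρ ∗ₘ (σ ∗ₘ ρ)).inv = (σ ∗ₘ ρ) ∗ₘ ρ := by rw [inv_mconv, inv_eq_self, inv_eq_self]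
  by_cases hr : (σ ∗ₘ ρ) ∗ₘ ρ = 0
  · rw [hr, ← inv_eq_zero_iff, hinv, hr]
  · have hl : ρ ∗ₘ (σ ∗ₘ ρ) ≠ 0 := fun hl ↦ hr (by rw [← hinv, hl, inv_eq_zero_iff])
    calc ρ ∗ₘ (σ ∗ₘ ρ) = (ρ ∗ₘ σ) ∗ₘ ρ := (mconv_assoc_of_ne_zero (by rwa [h]) hl).symm
      _ = (σ ∗ₘ ρ) ∗ₘ ρ := by rw [h]

end Group

end MeasureTheory.Measure

section ConvPow

variable {G : Type*} [MeasurableSpace G]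

lemma convPow_succ [Monoid G] (μ : Measure G) (n : ℕ) :
    convPow μ (n + 1) = convPow μ n ∗ₘ μ := rfl

instance [Monoid G] (μ : Measure G) [SFinite μ] (n : ℕ) : SFinite (convPow μ n) := by
  induction n with
  | zero => exact inferInstanceAs (SFinite (Measure.dirac 1))
  | succ n ih => rw [convPow_succ]; infer_instance

instance [Monoid G] (μ : Measure G) [IsZeroOrProbabilityMeasure μ] (n : ℕ) :
    IsZeroOrProbabilityMeasure (convPow μ n) := by
  induction n with
  | zero => exact inferInstanceAs (IsZeroOrProbabilityMeasure (Measure.dirac 1))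
  | succ n ih => rw [convPow_succ, Measure.mconv]; infer_instance

lemma isInvInvariant_convPow_and_mconv_comm [Group G] [MeasurableInv G] (μ : Measure G)
    [SFinite μ] [μ.IsInvInvariant] (n : ℕ) :
    (convPow μ n).IsInvInvariant ∧ μ ∗ₘ convPow μ n = convPow μ n ∗ₘ μ := by
  induction n with
  | zero => exact ⟨inferInstanceAs (Measure.dirac 1).IsInvInvariant, Measure.mconv_dirac_one_comm⟩
  | succ n ih =>
    have := ih.1
    rw [convPow_succ]
    exact ⟨Measure.IsInvInvariant.mconv ih.2, Measure.mconv_mconv_comm_of_isInvInvariant ih.2⟩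

end ConvPow

section Quasimorphism

variable {G : Type*} [Group G] {φ : G → ℝ} {D : ℝ}

lemma abs_apply_add_apply_inv_le (hD : ∀ g h : G, |φ (g * h) - φ g - φ h| ≤ D) (g : G) :
    |φ g + φ g⁻¹| ≤ 2 * D := by
  have hg := abs_le.1 (hD g g⁻¹)
  have h1 := abs_le.1 (hD 1 1)
  rw [mul_inv_cancel] at hg
  rw [mul_one] at h1
  exact abs_le.2 ⟨by linarith, by linarith⟩

lemma abs_integral_le_of_isInvInvariant [MeasurableSpace G] [MeasurableInv G] (ν : Measure G)
    [IsZeroOrProbabilityMeasure ν] [ν.IsInvInvariant]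
    (hD : ∀ g h : G, |φ (g * h) - φ g - φ h| ≤ D) : |∫ g, φ g ∂ν| ≤ D := by
  have hD₀ : 0 ≤ D := (abs_nonneg _).trans (hD 1 1)
  rcases eq_zero_or_isProbabilityMeasure ν with rfl | _
  · simpa using hD₀
  by_cases hφ : Integrable φ ν
  swap
  · simpa [integral_undef hφ] using hD₀
  have hsum : ∫ g, (φ g + φ g⁻¹) ∂ν = 2 * ∫ g, φ g ∂ν := by
    rw [integral_add hφ hφ.comp_inv, integral_inv_eq_self φ ν, two_mul]
  have := norm_integral_le_of_norm_le_const (μ := ν) (f := fun g ↦ φ g + φ g⁻¹)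
    (Eventually.of_forall (abs_apply_add_apply_inv_le hD ·))
  rw [probReal_univ, mul_one, Real.norm_eq_abs, hsum, abs_mul, abs_two] at this
  linarith

end Quasimorphism

theorem distortion_eq_zero_of_symmetric_general
    {G : Type*} [Group G] [TopologicalSpace G] [IsTopologicalGroup G]
    [MeasurableSpace G] [BorelSpace G]
    (μ : Measure G) [IsProbabilityMeasure μ]
    (hsymm : Measure.map (fun g : G => g⁻¹) μ = μ)
    (φ : G → ℝ)
    (hqm : ∃ D : ℝ, ∀ g h : G, |φ (g * h) - φ g - φ h| ≤ D) :
    Tendsto (fun n : ℕ => (∫ g, φ g ∂(convPow μ n)) / n) atTop (𝓝 0) := by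
  obtain ⟨D, hD⟩ := hqm
  have : μ.IsInvInvariant := ⟨hsymm⟩
  have hbound (n : ℕ) : |∫ g, φ g ∂(convPow μ n)| ≤ D :=
    have := (isInvInvariant_convPow_and_mconv_comm μ n).1
    abs_integral_le_of_isInvInvariant _ hD
  refine squeeze_zero_norm (fun n ↦ ?_) (tendsto_const_div_atTop_nhds_zero_nat D)
  rw [norm_div, Real.norm_natCast, Real.norm_eq_abs]
  exact div_le_div_of_nonneg_right (hbound n) n.cast_nonneg

/-- for a symmetric regular Borel probability measure `μ` and a Borel
measurable `μ`-integrable quasimorphism `φ`, the μ-distortion vanishes: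
`(1/n) ∫ φ dμ^{*n} → 0`. -/
theorem distortion_eq_zero_of_symmetric
    {G : Type*} [Group G] [TopologicalSpace G] [IsTopologicalGroup G]
    [MeasurableSpace G] [BorelSpace G]
    (μ : Measure G) [IsProbabilityMeasure μ] (hreg : μ.Regular)
    (hsymm : Measure.map (fun g : G => g⁻¹) μ = μ)
    (φ : G → ℝ) (hmeas : Measurable φ)
    (hqm : ∃ D : ℝ, ∀ g h : G, |φ (g * h) - φ g - φ h| ≤ D)
    (hint : Integrable φ μ) :
    Tendsto (fun n : ℕ => (∫ g, φ g ∂(convPow μ n)) / n) atTop (𝓝 0) :=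
  distortion_eq_zero_of_symmetric_general μ hsymm φ hqm
end
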